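/- Let C be a preadditive category that is ℚ-linear (each Hom-group is a ℚ-vector space and composition is ℚ-bilinear). Let X and B be objects of C, let h : X → X, u : B → X and v : X → B be morphisms, let e : B → B be an idempotent endomorphism (e∘e = e), let m ≥ 0 be an integer and let n be a nonzero rational number. Assume v∘hᵐ∘u = n·id_B and v∘hˡ∘u = 0 for every integer l with 0 ≤ l < m, where hˡ denotes the l-fold composite of h and composites are read right-to-left. For 0 ≤ i ≤ m define πᵢ := n⁻¹·(h^(m−i) ∘ u ∘ e ∘ v ∘ hⁱ) : X → X. Then πᵢ∘πᵢ = πᵢ for every i, and πᵢ∘πⱼ = 0 whenever i < j. -/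

import Mathlib

/-!
In the composite `πᵢ ∘ πⱼ` the middle factor is `v ∘ h^(m - j + i) ∘ u`, which is `n • 𝟙` when
`i = j` (the scalar cancels one `n⁻¹` and `e ∘ e = e` absorbs the doubled `e`) and vanishes when
`i < j`, since then the exponent is below `m`.
-/

open CategoryTheory

/-- The `l`-fold composite `hˡ` of an endomorphism `h` (with `h⁰ = 𝟙`). -/
def cpow {C : Type*} [Category C] {X : C} (h : X ⟶ X) : ℕ → (X ⟶ X)
  | 0 => 𝟙 X
  | l + 1 => cpow h l ≫ h

section

variable {C : Type*} [Category C]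

lemma cpow_add {X : C} (h : X ⟶ X) (a b : ℕ) : cpow h (a + b) = cpow h a ≫ cpow h b := by
  induction b with
  | zero => simp [cpow]
  | succ b ih => rw [← add_assoc, cpow, cpow, ih, Category.assoc]

lemma cpow_comp_cpow_assoc {X Y : C} (h : X ⟶ X) (a b : ℕ) (g : X ⟶ Y) :
    cpow h a ≫ cpow h b ≫ g = cpow h (a + b) ≫ g := by
  rw [cpow_add, Category.assoc]

lemma inv_smul_sandwich_comp_inv_smul_sandwich [Preadditive C] {K : Type*} [Field K] [Linear K C]
    {X Y W B : C} {e : B ⟶ B} (he : e ≫ e = e) {n : K} (hn : n ≠ 0)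
    (a : X ⟶ B) (b : B ⟶ Y) (c : Y ⟶ B) (d : B ⟶ W) (hbc : b ≫ c = n • 𝟙 B) :
    (n⁻¹ • (a ≫ e ≫ b)) ≫ (n⁻¹ • (c ≫ e ≫ d)) = n⁻¹ • (a ≫ e ≫ d) := by
  have hbcd : b ≫ c ≫ e ≫ d = n • (e ≫ d) := by
    rw [← Category.assoc, hbc, Linear.smul_comp, Category.id_comp]
  simp only [Linear.smul_comp, Linear.comp_smul, Category.assoc, hbcd, smul_smul,
    ← Category.assoc e e d, he]
  rw [inv_mul_cancel₀ hn, mul_one]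

end

/-- Steps 2–3 of the proof of Theorem `Murrequadrics`, abstractly: in a ℚ-linear
preadditive category, given `h : X ⟶ X`, `u : B ⟶ X`, `v : X ⟶ B`, an idempotent
`e : B ⟶ B`, and a nonzero rational `n` with `v∘hᵐ∘u = n·id_B` and `v∘hˡ∘u = 0` for
`0 ≤ l < m`, the morphisms `πᵢ := n⁻¹·(h^(m−i)∘u∘e∘v∘hⁱ) : X ⟶ X` (`0 ≤ i ≤ m`) are
idempotent and satisfy `πᵢ∘πⱼ = 0` whenever `i < j` (composites read right-to-left). -/
theorem stmt_7 {C : Type*} [Category C] [Preadditive C] [Linear ℚ C]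
    {X B : C} (h : X ⟶ X) (u : B ⟶ X) (v : X ⟶ B) (e : B ⟶ B)
    (he : e ≫ e = e) (m : ℕ) (n : ℚ) (hn : n ≠ 0)
    (hm : u ≫ cpow h m ≫ v = n • 𝟙 B)
    (hl : ∀ l : ℕ, l < m → u ≫ cpow h l ≫ v = 0)
    (π : ℕ → (X ⟶ X))
    (hπ : ∀ i, π i = n⁻¹ • (cpow h i ≫ v ≫ e ≫ u ≫ cpow h (m - i))) :
    (∀ i, i ≤ m → π i ≫ π i = π i) ∧
    (∀ i j, i ≤ m → j ≤ m → i < j → π j ≫ π i = 0) := by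
  refine ⟨fun i hi => ?_, fun i j _ hj hij => ?_⟩
  · have hsum : (u ≫ cpow h (m - i)) ≫ cpow h i ≫ v = n • 𝟙 B := by
      rw [Category.assoc, cpow_comp_cpow_assoc, Nat.sub_add_cancel hi, hm]
    simpa only [hπ, Category.assoc] using
      inv_smul_sandwich_comp_inv_smul_sandwich he hn (cpow h i ≫ v) _ _ (u ≫ cpow h (m - i)) hsum
  · have hgap : u ≫ cpow h (m - j) ≫ cpow h i ≫ v = 0 := by
      rw [cpow_comp_cpow_assoc, hl _ (by omega)]
    simp only [hπ, Linear.smul_comp, Linear.comp_smul, Category.assoc, reassoc_of% hgap,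
      Limits.zero_comp, Limits.comp_zero, smul_zero]
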